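/- arXiv:1910.06936 — 2 statements merged into one kernel-verified Lean document; each statement's English description precedes it below -/
import Mathlib

section
/- Under the assumptions E[1/x] = X₋₁ ∈ (0,∞) and E[y/x] = e^{-κΔt} + τ*(1 - e^{-κΔt})X₋₁, the limit of the MLE τ̂ₙ = ((1/n)Σᵢ yᵢ/xᵢ + κΔt - 1)/((1/n)Σᵢ 1/xᵢ · κΔt) as n → ∞ (almost surely, by the law of large numbers and continuous mapping) equals τ*(1 - e^{-κΔt})/(κΔt) + (e^{-κΔt} + κΔt - 1)/(X₋₁κΔt), and this limit equals τ* + O(Δt) as Δt → 0. -/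
open Real Filter

/-! The sample averages converge by assumption, so `τ̂ₙ` converges by continuity of the
rational map `(a, b) ↦ (a + κΔt - 1) / (b κΔt)` at `(e^{-κΔt} + τ*(1 - e^{-κΔt})X₋₁, X₋₁)`.
Writing `u = κΔt`, the limit minus `τ*` factors as `(e^{-u} - 1 + u)/u · (1/X₋₁ - τ*)`, and
the second-order Taylor bound `|e^{-u} - 1 + u| ≤ u²` for `u ≤ 1` makes it `O(Δt)`. -/

theorem tendsto_add_sub_one_div_mul {a b : ℕ → ℝ} {α β c : ℝ} (ha : Tendsto a atTop (nhds α))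
    (hb : Tendsto b atTop (nhds β)) (hβ : β ≠ 0) (hc : c ≠ 0) :
    Tendsto (fun n => (a n + c - 1) / (b n * c)) atTop (nhds ((α + c - 1) / (β * c))) :=
  ((ha.add_const c).sub_const 1).div (hb.mul_const c) (mul_ne_zero hβ hc)

theorem abs_exp_neg_add_sub_one_div_le {u : ℝ} (hu : 0 < u) (hu1 : u ≤ 1) :
    |(exp (-u) - 1 + u) / u| ≤ u := by
  have h := abs_exp_sub_one_sub_id_le (x := -u) (by rwa [abs_neg, abs_of_pos hu])
  rw [abs_div, abs_of_pos hu, div_le_iff₀ hu]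
  simpa [sq, sub_neg_eq_add] using h

theorem abs_mle_limit_sub_le {τ X u : ℝ} (hX : X ≠ 0) (hu : 0 < u) (hu1 : u ≤ 1) :
    |τ * (1 - exp (-u)) / u + (exp (-u) + u - 1) / (X * u) - τ| ≤ u * |1 / X - τ| := by
  have factor : τ * (1 - exp (-u)) / u + (exp (-u) + u - 1) / (X * u) - τ
      = (exp (-u) - 1 + u) / u * (1 / X - τ) := by
    field_simp
    ring
  rw [factor, abs_mul]
  exact mul_le_mul_of_nonneg_right (abs_exp_neg_add_sub_one_div_le hu hu1) (abs_nonneg _)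

/-- If the sample averages `(1/n)Σ yᵢ/xᵢ` and `(1/n)Σ 1/xᵢ` converge (law of large numbers)
to `e^{-κΔt} + τ*(1-e^{-κΔt})X₋₁` and `X₋₁` respectively, then the MLE
`τ̂ₙ = ((1/n)Σ yᵢ/xᵢ + κΔt - 1)/((1/n)Σ 1/xᵢ · κΔt)` converges to
`τ*(1-e^{-κΔt})/(κΔt) + (e^{-κΔt}+κΔt-1)/(X₋₁κΔt)`, and that limit is `τ* + O(Δt)`
as `Δt → 0⁺`. -/
theorem mle_tau_consistency (κ τs Xm1 : ℝ) (hκ : 0 < κ) (hX : 0 < Xm1)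
    (a b : ℝ → ℕ → ℝ)
    (ha : ∀ Δt > 0, Tendsto (a Δt) atTop
        (nhds (Real.exp (-κ * Δt) + τs * (1 - Real.exp (-κ * Δt)) * Xm1)))
    (hb : ∀ Δt > 0, Tendsto (b Δt) atTop (nhds Xm1)) :
    (∀ Δt > 0, Tendsto (fun n => (a Δt n + κ * Δt - 1) / (b Δt n * (κ * Δt))) atTop
        (nhds (τs * (1 - Real.exp (-κ * Δt)) / (κ * Δt)
          + (Real.exp (-κ * Δt) + κ * Δt - 1) / (Xm1 * (κ * Δt))))) ∧
    ∃ C > 0, ∃ δ > 0, ∀ Δt, 0 < Δt → Δt < δ →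
      |τs * (1 - Real.exp (-κ * Δt)) / (κ * Δt)
        + (Real.exp (-κ * Δt) + κ * Δt - 1) / (Xm1 * (κ * Δt)) - τs| ≤ C * Δt := by
  constructor
  · intro Δt hΔt
    have hu : κ * Δt ≠ 0 := (mul_pos hκ hΔt).ne'
    convert tendsto_add_sub_one_div_mul (ha Δt hΔt) (hb Δt hΔt) hX.ne' hu using 2
    field_simp
    ring
  · refine ⟨κ * |1 / Xm1 - τs| + 1, by positivity, 1 / κ, by positivity, fun Δt hΔt hδ => ?_⟩
    have hu1 : κ * Δt ≤ 1 := by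
      rw [lt_div_iff₀ hκ] at hδ
      linarith
    calc _ ≤ κ * Δt * |1 / Xm1 - τs| := by
          rw [neg_mul]
          exact abs_mle_limit_sub_le hX.ne' (mul_pos hκ hΔt) hu1
      _ ≤ (κ * |1 / Xm1 - τs| + 1) * Δt := by nlinarith
end

section
/- For the MLE of κ in the CIR Euler discretization, κ̂ₙ = (1/Δt) · (τ·(1/n)Σyᵢ/xᵢ - (1/n)Σyᵢ - τ + (1/n)Σxᵢ) / (τ²·(1/n)Σ1/xᵢ - 2τ + (1/n)Σxᵢ), if the sample averages converge to X₋₁ = E[1/x], X₀ = E[x], and E[y] = X₀e^{-κ*Δt} + τ(1 - e^{-κ*Δt}), E[y/x] = e^{-κ*Δt} + τ(1 - e^{-κ*Δt})X₋₁, and the denominator limit τ²X₋₁ - 2τ + X₀ ≠ 0, then κ̂ₙ converges to (1/Δt)·(1 - e^{-κ*Δt})·(τ²X₋₁ - 2τ + X₀)/(τ²X₋₁ - 2τ + X₀) = (1 - e^{-κ*Δt})/Δt, which equals κ* + O(Δt) as Δt → 0. -/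
/-!
The limit of the sample averages turns the numerator of `κ̂ₙ` into `(1 - e^{-κ*Δt})` times the
limit of the denominator, so the ratio converges by continuity of division away from zero.
The `O(Δt)` bound is the second-order Taylor estimate `|eˣ - 1 - x| ≤ x²` for `|x| ≤ 1`.
-/

open Real Filter Topology

theorem Filter.Tendsto.div_of_tendsto_mul {α : Type*} {l : Filter α} {f g : α → ℝ} {r D : ℝ}
    (hf : Tendsto f l (𝓝 (r * D))) (hg : Tendsto g l (𝓝 D)) (hD : D ≠ 0) :
    Tendsto (fun x => f x / g x) l (𝓝 r) := by
  rw [← mul_div_cancel_right₀ r hD]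
  exact hf.div hg hD

theorem cir_mle_numerator_limit_eq (τ X0 Xm1 e : ℝ) :
    τ * (e + τ * (1 - e) * Xm1) - (X0 * e + τ * (1 - e)) - τ + X0
      = (1 - e) * (τ ^ 2 * Xm1 - 2 * τ + X0) := by
  ring

theorem abs_one_sub_exp_neg_mul_div_sub_le {κ t : ℝ} (ht : 0 < t) (hκt : |κ * t| ≤ 1) :
    |(1 - exp (-κ * t)) / t - κ| ≤ κ ^ 2 * t := by
  have hrewrite : (1 - exp (-κ * t)) / t - κ = -(exp (-(κ * t)) - 1 - -(κ * t)) / t := by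
    field_simp
    ring_nf
  rw [hrewrite, abs_div, abs_neg, abs_of_pos ht, div_le_iff₀ ht]
  calc |exp (-(κ * t)) - 1 - -(κ * t)| ≤ (-(κ * t)) ^ 2 :=
        abs_exp_sub_one_sub_id_le (by rwa [abs_neg])
    _ = κ ^ 2 * t * t := by ring

theorem mle_kappa_consistency_general (κs τ Δt X0 Xm1 : ℝ)
    (hκ : 0 < κs)
    (a b c d : ℕ → ℝ)
    (ha : Tendsto a atTop (nhds (Real.exp (-κs * Δt) + τ * (1 - Real.exp (-κs * Δt)) * Xm1)))
    (hc : Tendsto c atTop (nhds (X0 * Real.exp (-κs * Δt) + τ * (1 - Real.exp (-κs * Δt)))))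
    (hb : Tendsto b atTop (nhds Xm1))
    (hd : Tendsto d atTop (nhds X0))
    (hden : τ ^ 2 * Xm1 - 2 * τ + X0 ≠ 0) :
    Tendsto (fun n => (1 / Δt) * (τ * a n - c n - τ + d n) / (τ ^ 2 * b n - 2 * τ + d n))
        atTop (nhds ((1 - Real.exp (-κs * Δt)) / Δt)) ∧
    ∃ C > 0, ∃ δ > 0, ∀ t, 0 < t → t < δ →
      |(1 - Real.exp (-κs * t)) / t - κs| ≤ C * t := by
  constructor
  · have hnum := (((ha.const_mul τ).sub hc).sub_const τ |>.add hd).const_mul (1 / Δt)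
    rw [cir_mle_numerator_limit_eq, ← mul_assoc, one_div_mul_eq_div] at hnum
    exact hnum.div_of_tendsto_mul (((hb.const_mul (τ ^ 2)).sub_const (2 * τ)).add hd) hden
  · refine ⟨κs ^ 2, by positivity, 1 / κs, by positivity, fun t ht htδ => ?_⟩
    refine abs_one_sub_exp_neg_mul_div_sub_le ht ?_
    rw [abs_of_pos (by positivity)]
    exact (lt_div_iff₀' hκ).1 htδ |>.le

/-- Consistency of the MLE of `κ` in the CIR Euler discretization: if the sample averages
of `y/x`, `y`, `1/x`, `x` converge to their population values (given by the CIR conditional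
mean identity), and the denominator limit `τ²X₋₁ - 2τ + X₀ ≠ 0`, then
`κ̂ₙ = (1/Δt)·(τ·avg(y/x) - avg(y) - τ + avg(x))/(τ²·avg(1/x) - 2τ + avg(x))`
converges to `(1 - e^{-κ*Δt})/Δt`, which equals `κ* + O(Δt)` as `Δt → 0`. -/
theorem mle_kappa_consistency (κs τ σ Δt X0 Xm1 : ℝ)
    (hκ : 0 < κs) (hτ : 0 < τ) (hσ : 0 < σ) (hΔt : 0 < Δt)
    (a b c d : ℕ → ℝ)
    (ha : Tendsto a atTop (nhds (Real.exp (-κs * Δt) + τ * (1 - Real.exp (-κs * Δt)) * Xm1)))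
    (hc : Tendsto c atTop (nhds (X0 * Real.exp (-κs * Δt) + τ * (1 - Real.exp (-κs * Δt)))))
    (hb : Tendsto b atTop (nhds Xm1))
    (hd : Tendsto d atTop (nhds X0))
    (hden : τ ^ 2 * Xm1 - 2 * τ + X0 ≠ 0) :
    Tendsto (fun n => (1 / Δt) * (τ * a n - c n - τ + d n) / (τ ^ 2 * b n - 2 * τ + d n))
        atTop (nhds ((1 - Real.exp (-κs * Δt)) / Δt)) ∧
    ∃ C > 0, ∃ δ > 0, ∀ t, 0 < t → t < δ →
      |(1 - Real.exp (-κs * t)) / t - κs| ≤ C * t :=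
  mle_kappa_consistency_general κs τ Δt X0 Xm1 hκ a b c d ha hc hb hd hden
end
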